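/- Let A be a unital C*-algebra over ℂ with state space S (continuous linear functionals φ : A → ℂ with φ(1) = 1 and φ(x* x) real and nonnegative for all x), equipped with the weak-* topology and its Borel σ-algebra. Let μ be a Borel probability measure on S and let ρ be a state that is the barycenter of μ, i.e. ρ(Z) = ∫_S φ(Z) dμ(φ) for all Z ∈ A. Then for all X, Y ∈ A: ( ∫_S |φ(X* X) − φ(Y* Y)| dμ(φ) )² ≤ 2 ρ(X* X + Y* Y) · ρ((X − Y)*(X − Y)). -/

import Mathlib

open MeasureTheory
open scoped ComplexOrder

/-- The state space of a (unital, star, topological) complex algebra: the set of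
continuous linear functionals `φ` (with the weak-* topology inherited from
`WeakDual ℂ A`) satisfying `φ 1 = 1` and `φ (x* x)` real and nonnegative. -/
def StateSpace (A : Type*) [Ring A] [StarRing A] [Module ℂ A] [TopologicalSpace A] :
    Set (WeakDual ℂ A) :=
  {φ | φ 1 = 1 ∧ ∀ x : A, 0 ≤ φ (star x * x)}

/-- The Borel σ-algebra of the weak-* topology on the state space. -/
noncomputable instance StateSpace.instMeasurableSpace (A : Type*) [Ring A] [StarRing A]
    [Module ℂ A] [TopologicalSpace A] : MeasurableSpace ↥(StateSpace A) :=
  borel _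

/-!
A state `φ` defines the GNS seminorm `‖x‖_φ = φ(x⋆x)^{1/2}`, and the reverse triangle inequality
for it gives the pointwise bound `|φ(X⋆X) − φ(Y⋆Y)| ≤ ‖X − Y‖_φ (‖X‖_φ + ‖Y‖_φ)`. Integrating
over `μ`, Cauchy–Schwarz in `L²(μ)` together with `(a + b)² ≤ 2(a² + b²)` bounds the square of the
right-hand side by `2 ∫ φ(X⋆X + Y⋆Y) dμ · ∫ φ((X−Y)⋆(X−Y)) dμ`, and the barycenter identity turns
these integrals into values of `ρ`.
-/

namespace MeasureTheory

variable {α : Type*} [MeasurableSpace α] {μ : Measure α}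

theorem sq_integral_mul_le_integral_sq_mul_integral_sq {f g : α → ℝ}
    (hf : MemLp f 2 μ) (hg : MemLp g 2 μ) :
    (∫ x, f x * g x ∂μ) ^ 2 ≤ (∫ x, f x ^ 2 ∂μ) * ∫ x, g x ^ 2 ∂μ := by
  have holder := integral_mul_norm_le_Lp_mul_Lq Real.HolderConjugate.two_two
    (by simpa using hf) (by simpa using hg)
  simp only [Real.rpow_two, Real.norm_eq_abs, sq_abs, ← Real.sqrt_eq_rpow] at holder
  calc (∫ x, f x * g x ∂μ) ^ 2 ≤ (∫ x, |f x| * |g x| ∂μ) ^ 2 := by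
        rw [← sq_abs]
        refine pow_le_pow_left₀ (abs_nonneg _) ?_ 2
        simpa only [abs_mul] using abs_integral_le_integral_abs (f := fun x => f x * g x) (μ := μ)
    _ ≤ (√(∫ x, f x ^ 2 ∂μ) * √(∫ x, g x ^ 2 ∂μ)) ^ 2 :=
        pow_le_pow_left₀ (integral_nonneg fun x => by positivity) holder 2
    _ = (∫ x, f x ^ 2 ∂μ) * ∫ x, g x ^ 2 ∂μ := by
        rw [mul_pow, Real.sq_sqrt (integral_nonneg fun x => sq_nonneg _),
          Real.sq_sqrt (integral_nonneg fun x => sq_nonneg _)]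

theorem Integrable.memLp_two_sqrt {f : α → ℝ} (hf : Integrable f μ) (hf0 : 0 ≤ f) :
    MemLp (fun x => √(f x)) 2 μ := by
  refine (memLp_two_iff_integrable_sq
    (Real.continuous_sqrt.comp_aestronglyMeasurable hf.aestronglyMeasurable)).2 ?_
  simpa only [Real.sq_sqrt (hf0 _)] using hf

theorem sq_integral_abs_sub_le {p q d : α → ℝ} (hp : Integrable p μ) (hq : Integrable q μ)
    (hd : Integrable d μ) (hp0 : 0 ≤ p) (hq0 : 0 ≤ q) (hd0 : 0 ≤ d)
    (hpqd : ∀ x, |p x - q x| ≤ √(d x) * (√(p x) + √(q x))) :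
    (∫ x, |p x - q x| ∂μ) ^ 2 ≤ 2 * (∫ x, p x ∂μ + ∫ x, q x ∂μ) * ∫ x, d x ∂μ := by
  have hsqrt_d := hd.memLp_two_sqrt hd0
  have hsqrt_pq := (hp.memLp_two_sqrt hp0).add (hq.memLp_two_sqrt hq0)
  have hsum_sq : ∀ x, (√(p x) + √(q x)) ^ 2 ≤ 2 * (p x + q x) := fun x => by
    nlinarith [sq_nonneg (√(p x) - √(q x)), Real.sq_sqrt (hp0 x), Real.sq_sqrt (hq0 x)]
  calc (∫ x, |p x - q x| ∂μ) ^ 2 ≤ (∫ x, √(d x) * (√(p x) + √(q x)) ∂μ) ^ 2 :=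
        pow_le_pow_left₀ (integral_nonneg fun x => abs_nonneg _)
          (integral_mono (hp.sub hq).abs (hsqrt_d.integrable_mul hsqrt_pq) hpqd) 2
    _ ≤ (∫ x, √(d x) ^ 2 ∂μ) * ∫ x, (√(p x) + √(q x)) ^ 2 ∂μ :=
        sq_integral_mul_le_integral_sq_mul_integral_sq hsqrt_d hsqrt_pq
    _ ≤ (∫ x, d x ∂μ) * ∫ x, 2 * (p x + q x) ∂μ := by
        simp only [Real.sq_sqrt (hd0 _)]
        exact mul_le_mul_of_nonneg_left
          (integral_mono hsqrt_pq.integrable_sq ((hp.add hq).const_mul 2) hsum_sq)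
          (integral_nonneg hd0)
    _ = 2 * (∫ x, p x ∂μ + ∫ x, q x ∂μ) * ∫ x, d x ∂μ := by
        rw [integral_const_mul, integral_add hp hq]; ring

end MeasureTheory

theorem abs_sq_norm_sub_sq_norm_le {E : Type*} [SeminormedAddCommGroup E] (a b : E) :
    |‖a‖ ^ 2 - ‖b‖ ^ 2| ≤ ‖a - b‖ * (‖a‖ + ‖b‖) := by
  rw [sq_sub_sq, abs_mul, abs_of_nonneg (by positivity : 0 ≤ ‖a‖ + ‖b‖), mul_comm]
  exact mul_le_mul_of_nonneg_right (abs_norm_sub_norm_le a b) (by positivity)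

namespace PositiveLinearMap

variable {A : Type*} [CStarAlgebra A] [PartialOrder A] [StarOrderedRing A]

theorem abs_re_apply_star_mul_self_sub_le (f : A →ₚ[ℂ] ℂ) (x y : A) :
    |(f (star x * x)).re - (f (star y * y)).re| ≤
      √(f (star (x - y) * (x - y))).re * (√(f (star x * x)).re + √(f (star y * y)).re) := by
  have hnorm : ∀ z : A, √(f (star z * z)).re = ‖f.toPreGNS z‖ := fun z => rfl
  have hre : ∀ z : A, (f (star z * z)).re = ‖f.toPreGNS z‖ ^ 2 := fun z => by
    rw [← hnorm, Real.sq_sqrt (f.map_nonneg (star_mul_self_nonneg z)).1]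
  rw [hnorm, hnorm, hnorm, hre, hre, map_sub]
  exact abs_sq_norm_sub_sq_norm_le (f.toPreGNS x) (f.toPreGNS y)

end PositiveLinearMap

instance StateSpace.instBorelSpace (A : Type*) [Ring A] [StarRing A] [Module ℂ A]
    [TopologicalSpace A] : BorelSpace (StateSpace A) := ⟨rfl⟩

namespace StateSpace

variable {A : Type*} [CStarAlgebra A] [PartialOrder A] [StarOrderedRing A]

noncomputable def toPositiveLinearMap {φ : WeakDual ℂ A} (hφ : φ ∈ StateSpace A) : A →ₚ[ℂ] ℂ :=
  .mk₀ (φ : A →ₗ[ℂ] ℂ) fun a ha => by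
    obtain ⟨b, rfl⟩ := CStarAlgebra.nonneg_iff_eq_star_mul_self.mp ha
    exact hφ.2 b

@[simp]
theorem toPositiveLinearMap_apply {φ : WeakDual ℂ A} (hφ : φ ∈ StateSpace A) (a : A) :
    toPositiveLinearMap hφ a = φ a := rfl

theorem norm_apply_le_of_nonneg {φ : WeakDual ℂ A} (hφ : φ ∈ StateSpace A) {a : A} (ha : 0 ≤ a) :
    ‖φ a‖ ≤ ‖a‖ := by
  simpa [hφ.1] using (toPositiveLinearMap hφ).norm_apply_le_of_nonneg a ha

theorem integrable_apply_of_nonneg (μ : Measure (StateSpace A)) [IsFiniteMeasure μ] {a : A}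
    (ha : 0 ≤ a) : Integrable (fun φ : StateSpace A => φ.1 a) μ :=
  .of_bound ((WeakDual.eval_continuous a).comp continuous_subtype_val).aestronglyMeasurable ‖a‖
    (ae_of_all _ fun φ => norm_apply_le_of_nonneg φ.2 ha)

end StateSpace

theorem barycenter_L1_cauchy_estimate_general
    {A : Type*} [NormedRing A] [StarRing A] [CStarRing A]
    [NormedAlgebra ℂ A] [StarModule ℂ A] [CompleteSpace A]
    (μ : Measure ↥(StateSpace A)) [IsProbabilityMeasure μ]
    (ρ : WeakDual ℂ A)
    (hbar : ∀ Z : A, ρ Z = ∫ φ, φ.1 Z ∂μ) (X Y : A) :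
    (∫ φ, |(φ.1 (star X * X)).re - (φ.1 (star Y * Y)).re| ∂μ) ^ 2 ≤
      2 * (ρ (star X * X + star Y * Y)).re * (ρ (star (X - Y) * (X - Y))).re := by
  let : CStarAlgebra A := {}
  let := CStarAlgebra.spectralOrder A
  let := CStarAlgebra.spectralOrderedRing A
  have hint (Z : A) : Integrable (fun φ : StateSpace A => φ.1 (star Z * Z)) μ :=
    StateSpace.integrable_apply_of_nonneg μ (star_mul_self_nonneg Z)
  have hρ (Z : A) : (ρ (star Z * Z)).re = ∫ φ, (φ.1 (star Z * Z)).re ∂μ := by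
    rw [hbar]; exact (integral_re (hint Z)).symm
  rw [map_add, Complex.add_re, hρ, hρ, hρ]
  exact sq_integral_abs_sub_le (hint X).re (hint Y).re (hint (X - Y)).re
    (fun φ => (φ.2.2 X).1) (fun φ => (φ.2.2 Y).1) (fun φ => (φ.2.2 (X - Y)).1)
    fun φ => (StateSpace.toPositiveLinearMap φ.2).abs_re_apply_star_mul_self_sub_le X Y

/-- **The L¹ Cauchy estimate for randomized states.**
If `ρ` is the barycenter of the Borel probability measure `μ` on the state space of a
unital C*-algebra, then for all `X Y`:
`(∫ |φ(X*X) − φ(Y*Y)| dμ(φ))² ≤ 2 ρ(X*X + Y*Y) ρ((X−Y)*(X−Y))`. -/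
theorem barycenter_L1_cauchy_estimate
    {A : Type*} [NormedRing A] [StarRing A] [CStarRing A]
    [NormedAlgebra ℂ A] [StarModule ℂ A] [CompleteSpace A]
    (μ : Measure ↥(StateSpace A)) [IsProbabilityMeasure μ]
    (ρ : WeakDual ℂ A) (hρ : ρ ∈ StateSpace A)
    (hbar : ∀ Z : A, ρ Z = ∫ φ, φ.1 Z ∂μ) (X Y : A) :
    (∫ φ, |(φ.1 (star X * X)).re - (φ.1 (star Y * Y)).re| ∂μ) ^ 2 ≤
      2 * (ρ (star X * X + star Y * Y)).re * (ρ (star (X - Y) * (X - Y))).re :=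
  barycenter_L1_cauchy_estimate_general μ ρ hbar X Y
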